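/- In a group presentation where each relator r satisfies the C'(1/6) condition and all relators have boundary length greater than 12, any subword of a relator that is a piece has length at most |r|/6 − 1; in particular, a configuration of m ≥ 12 distinct blocks b_1,...,b_m of equal length separating copies of a fixed word a guarantees that any piece contained in b_j a b_{j+1} has length less than one sixth of the total relator length m(|a|+|b|) + 2. -/
import Mathlib

/-- Piece bound for the relators `t xᵢ t⁻¹ (b₁ a b₂ a ⋯ a bₘ)`: with `m ≥ 12`
pairwise distinct blocks `b j` of common length `|b| ≥ 1` separating copies of
a fixed word `a`, any piece contained in a subword `b_j a b_{j'}` has length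
less than one sixth of the total relator length `m(|a| + |b|) + 2`. -/
theorem piece_in_block_bound {L : Type*} (a : List L) (m : ℕ) (hm : 12 ≤ m)
    (b : Fin m → List L) (blen : ℕ) (hblen : 1 ≤ blen)
    (hlen : ∀ j, (b j).length = blen)
    (hdist : Function.Injective b) :
    ∀ (j j' : Fin m) (p : List L), p <:+: (b j ++ a ++ b j') →
      6 * p.length < m * (a.length + blen) + 2 := by
  intro j j' p hp
  have hle : p.length ≤ blen + a.length + blen := by
    have := hp.length_le
    simp [List.length_append, hlen] at this; omega
  calc 6 * p.length ≤ 6 * (blen + a.length + blen) := by omega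
    _ ≤ 12 * (a.length + blen) := by ring_nf; omega
    _ ≤ m * (a.length + blen) := Nat.mul_le_mul_right _ hm
    _ < m * (a.length + blen) + 2 := by omega
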